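/- arXiv:1402.3573 — 3 statements merged into one kernel-verified Lean document; each statement's English description precedes it below -/
import Mathlib

section
/- Let G be a finite simple graph with a uv-concentrated tree 3-spanner T, let Q be a connected component of G \ N_G[u,v] containing a vertex at T-distance exactly 2 from u, and let Q^u be the connected component of G \ N_G[u] containing Q. Then every vertex of N_G(Q^u) (the set of vertices outside Q^u with a G-neighbor in Q^u) is T-adjacent to u. -/
/-!
Removing the edge `uv` splits the tree `T` into the `u`-side (vertices `T`-closer to `u` than to
`v`) and the `v`-side, and every `T`-walk between the sides crosses `uv`. A vertex of
`G \ N_G[u]` on the `u`-side is at `T`-distance at least 2 from `u`, so a `G`-edge from it to a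
`v`-side vertex other than `v` would have `T`-stretch at least 4, contradicting the 3-spanner
property. Since `v ∈ N_G[u]`, the component `Q^u` of `p` stays on the `u`-side, where `p` lies
because `T.dist u p = 2` and `p` is not a `G`-neighbour of `v`. A vertex `z ∉ Q^u` with a
`G`-neighbour in `Q^u` lies in `N_G(u)`; by the same stretch argument it is `v` or on the
`u`-side, and in the latter case concentration makes it `T`-adjacent to `u`.
-/

namespace SimpleGraph

variable {V : Type*} {G T : SimpleGraph V}

theorem Walk.dist_add_dist_le_length {s t c : V} (p : G.Walk s t) (hc : c ∈ p.support) :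
    G.dist s c + G.dist c t ≤ p.length := by
  classical
  rw [← p.take_spec hc, Walk.length_append]
  exact add_le_add (G.dist_le _) (G.dist_le _)

theorem Reachable.of_adj_closed {P : V → Prop} (hP : ∀ ⦃x y⦄, G.Adj x y → P x → P y)
    {x y : V} (h : G.Reachable x y) (hx : P x) : P y := by
  obtain ⟨W⟩ := h
  induction W with
  | nil => exact hx
  | cons hadj _ ih => exact ih (hP hadj hx)

theorem IsAcyclic.mem_support_of_dist_lt (hT : T.IsAcyclic) {a u v : V} (hvu : T.Adj v u)
    {P : T.Walk a u} (hP : P.IsPath) (h : T.dist a v < T.dist a u) : v ∈ P.support := by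
  by_contra hv
  obtain ⟨p, hp, hpl⟩ := (P.reachable.trans hvu.symm.reachable).exists_path_of_dist
  have hu := p.dist_add_dist_le_length <|
    hT.mem_support_of_ne_mem_support_of_adj_of_isPath hp hP hvu hv
  omega

theorem IsTree.eq_of_adj_of_dist_lt (hT : T.IsTree) {u v a b : V} (huv : T.Adj u v)
    (hab : T.Adj a b) (ha : T.dist a v < T.dist a u) (hb : T.dist b u < T.dist b v) :
    a = v ∧ b = u := by
  obtain ⟨Q, hQ, hQl⟩ := hT.connected.exists_path_of_dist b u
  have hba : T.dist b a = 1 := dist_eq_one_iff_adj.2 hab.symm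
  obtain rfl : a = v := by
    by_cases haQ : a ∈ Q.support
    · have := Q.dist_add_dist_le_length haQ
      have := hT.connected.dist_triangle (u := b) (v := a) (w := v)
      omega
    · have hv := hT.isAcyclic.mem_support_of_dist_lt huv.symm (hQ.cons haQ (h := hab)) ha
      rw [Walk.support_cons, List.mem_cons] at hv
      refine (hv.resolve_right fun hv ↦ ?_).symm
      have := Q.dist_add_dist_le_length hv
      omega
  exact ⟨rfl, hT.connected.dist_eq_zero_iff.1 (by omega)⟩

theorem IsTree.dist_add_one_add_dist_le_length (hT : T.IsTree) {u v x y : V} (huv : T.Adj u v)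
    (W : T.Walk x y) (hx : T.dist x v < T.dist x u) (hy : T.dist y u < T.dist y v) :
    T.dist x v + 1 + T.dist u y ≤ W.length := by
  induction W with
  | nil => omega
  | @cons a c y hac W ih =>
    rw [Walk.length_cons]
    rcases lt_or_gt_of_ne (hT.dist_ne_of_adj c huv) with hc | hc
    · obtain ⟨rfl, rfl⟩ := hT.eq_of_adj_of_dist_lt huv hac hx hc
      simpa [add_comm] using T.dist_le W
    · have := hT.connected.dist_triangle (u := a) (v := c) (w := v)
      have := dist_eq_one_iff_adj.2 hac
      have := ih hc hy
      omega

theorem IsTree.dist_add_one_add_dist_le_dist (hT : T.IsTree) {u v x y : V} (huv : T.Adj u v)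
    (hx : T.dist x v < T.dist x u) (hy : T.dist y u < T.dist y v) :
    T.dist x v + 1 + T.dist u y ≤ T.dist x y := by
  obtain ⟨W, hW⟩ := hT.connected.exists_walk_length_eq_dist x y
  exact hW ▸ hT.dist_add_one_add_dist_le_length huv W hx hy

theorem IsTree.eq_of_dist_le_three (hT : T.IsTree) {u v x y : V} (huv : T.Adj u v)
    (hx : T.dist x u < T.dist x v) (hy : T.dist y v < T.dist y u) (hux : 1 < T.dist u x)
    (hyx : T.dist y x ≤ 3) : y = v :=
  hT.connected.dist_eq_zero_iff.1 <| by
    have := hT.dist_add_one_add_dist_le_dist huv hy hx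
    omega

end SimpleGraph

open SimpleGraph

theorem stmt_8_general {V : Type*} (G T : SimpleGraph V) (u v p : V)
    (hle : T ≤ G) (hT : T.IsTree)
    (hspan : ∀ x y : V, T.dist x y ≤ 3 * G.dist x y)
    (hadj : T.Adj u v)
    (hconc_u : ∀ w : V, G.Adj u w → T.dist w u < T.dist w v → T.Adj u w)
    (hp : ¬ (p = u ∨ p = v ∨ G.Adj u p ∨ G.Adj v p))
    (hdist : T.dist u p = 2)
    (Su : Set V) (hSu : Su = {w | w ≠ u ∧ ¬ G.Adj u w}) (hpSu : p ∈ Su)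
    (Qu : Set V)
    (hQu : Qu = {w | ∃ hw : w ∈ Su, (G.induce Su).Reachable ⟨p, hpSu⟩ ⟨w, hw⟩}) :
    ∀ z : V, z ∉ Qu → (∃ w ∈ Qu, G.Adj z w) → T.Adj u z := by
  subst hQu
  have hstretch {x y : V} (h : G.Adj x y) : T.dist x y ≤ 3 := by
    simpa [dist_eq_one_iff_adj.2 h] using hspan x y
  have hfar {x : V} (hx : x ∈ Su) : 1 < T.dist u x := by
    rw [hSu] at hx
    exact hT.connected.one_lt_dist_of_ne_of_not_adj (Ne.symm hx.1) fun h ↦ hx.2 (hle h)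
  have hv : v ∉ Su := fun h ↦ by rw [hSu] at h; exact h.2 (hle hadj)
  have hp_side : T.dist p u < T.dist p v := by
    refine (lt_or_gt_of_ne (hT.dist_ne_of_adj p hadj)).resolve_right fun h ↦
      hp <| .inr <| .inr <| .inr ?_
    have := hT.dist_eq_dist_add_one_of_adj p hadj
    rw [dist_comm] at hdist
    exact (hle (dist_eq_one_iff_adj.1 (by omega))).symm
  have hQ_side {w : Su} (h : (G.induce Su).Reachable ⟨p, hpSu⟩ w) : T.dist w u < T.dist w v :=
    h.of_adj_closed (P := fun x : Su ↦ T.dist (x : V) u < T.dist x v) (fun x y hxy hx ↦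
      (lt_or_gt_of_ne (hT.dist_ne_of_adj y hadj)).resolve_right fun hy ↦ hv <|
        hT.eq_of_dist_le_three hadj hx hy (hfar x.2) (hstretch (comap_adj.1 hxy).symm) ▸ y.2)
      hp_side
  rintro z hzQ ⟨w, ⟨hwS, hreach⟩, hzw⟩
  have hzS : z ∉ Su := fun hzS ↦
    have hwz : (G.induce Su).Adj ⟨w, hwS⟩ ⟨z, hzS⟩ := hzw.symm
    hzQ ⟨hzS, hreach.trans hwz.reachable⟩
  have hGuz : G.Adj u z := by
    rw [hSu] at hzS hwS
    by_contra h
    exact hzS ⟨by rintro rfl; exact hwS.2 hzw, h⟩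
  rcases lt_or_gt_of_ne (hT.dist_ne_of_adj z hadj) with hz | hz
  · exact hconc_u z hGuz hz
  · obtain rfl := hT.eq_of_dist_le_three hadj (hQ_side hreach) hz (hfar hwS) (hstretch hzw)
    exact hadj

/-- In a `uv`-concentrated tree 3-spanner, if a component of `G \ N_G[u,v]` contains a vertex
`p` at `T`-distance 2 from `u`, and `Q^u` is the component of `G \ N_G[u]` containing `p`, then
every vertex of `N_G(Q^u)` is `T`-adjacent to `u`. -/
theorem stmt_8 {V : Type*} [Fintype V] (G T : SimpleGraph V) (u v p : V)
    (hle : T ≤ G) (hT : T.IsTree)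
    (hspan : ∀ x y : V, T.dist x y ≤ 3 * G.dist x y)
    (hadj : T.Adj u v)
    (hcenter : ∀ w : V, T.dist u w ≤ 2 ∨ T.dist v w ≤ 2)
    (hconc_u : ∀ w : V, G.Adj u w → T.dist w u < T.dist w v → T.Adj u w)
    (hconc_v : ∀ w : V, G.Adj v w → T.dist w v < T.dist w u → T.Adj v w)
    (hp : ¬ (p = u ∨ p = v ∨ G.Adj u p ∨ G.Adj v p))
    (hdist : T.dist u p = 2)
    (Su : Set V) (hSu : Su = {w | w ≠ u ∧ ¬ G.Adj u w}) (hpSu : p ∈ Su)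
    (Qu : Set V)
    (hQu : Qu = {w | ∃ hw : w ∈ Su, (G.induce Su).Reachable ⟨p, hpSu⟩ ⟨w, hw⟩}) :
    ∀ z : V, z ∉ Qu → (∃ w ∈ Qu, G.Adj z w) → T.Adj u z :=
  stmt_8_general G T u v p hle hT hspan hadj hconc_u hp hdist Su hSu hpSu Qu hQu
end

section
/- Let G be a finite simple graph of diameter at most 3 that admits a tree 3-spanner. Then G admits a tree 3-spanner of diameter at most 5. -/
/-!
Since `G` has diameter at most `3`, a tree `3`-spanner `T` of `G` has diameter at most `9`, and it
suffices to lower a diameter `D = 2K + e ≥ 6` (`e ≤ 1`) by one. Every vertex of `T` is within `K`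
of the centre of `T` (a vertex if `e = 0`, an edge if `e = 1`), so the vertices at depth `K` are
leaves. Every `G`-neighbour of such a leaf `z` is within `T`-distance `3` of it; if `z` is
`G`-adjacent neither to its grandparent nor to its great-grandparent, all its `G`-neighbours lie
in the subtree of its grandparent. Since `G` has diameter `3`, all such stuck leaves share one
grandparent `g₀`. Re-hanging every other deep leaf on whichever of its grandparent and
great-grandparent is a `G`-neighbour keeps a tree `3`-spanner, and afterwards only grandchildren of `g₀`, which are pairwise within distance
`4 ≤ 2K - 1`, remain at depth `K`: the diameter drops to `2K - 1 + e`.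
-/

namespace SimpleGraph

variable {V : Type*}

section Metric

variable {G T : SimpleGraph V}

lemma Connected.exists_adj_dist_add_one_eq (hG : G.Connected) {x y : V} (hxy : x ≠ y) :
    ∃ m, G.Adj x m ∧ G.dist m y + 1 = G.dist x y := by
  obtain ⟨p, hp⟩ := hG.exists_walk_length_eq_dist x y
  cases p with
  | nil => exact absurd rfl hxy
  | @cons _ m _ hadj q =>
    have hq := dist_le q
    have htri : G.dist x y ≤ G.dist x m + G.dist m y := hG.dist_triangle
    rw [dist_eq_one_iff_adj.2 hadj] at htri
    rw [Walk.length_cons] at hp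
    exact ⟨_, hadj, by omega⟩

lemma Connected.exists_dist_eq_of_le (hG : G.Connected) {a b : V} {k : ℕ}
    (hk : k ≤ G.dist a b) : ∃ c, G.dist a c = k ∧ G.dist a c + G.dist c b = G.dist a b := by
  induction k with
  | zero => exact ⟨a, by simp⟩
  | succ k ih =>
    obtain ⟨c, hac, hcb⟩ := ih (by omega)
    obtain ⟨m, hcm, hmb⟩ := hG.exists_adj_dist_add_one_eq (x := c) (y := b) (by
      rintro rfl; simp at hcb; omega)
    have h₁ : G.dist a m ≤ G.dist a c + G.dist c m := hG.dist_triangle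
    have h₂ : G.dist a b ≤ G.dist a m + G.dist m b := hG.dist_triangle
    rw [dist_eq_one_iff_adj.2 hcm] at h₁
    exact ⟨m, by omega, by omega⟩

lemma Connected.dist_le_mul_length (hT : T.Connected) {k : ℕ}
    (h : ∀ a b, G.Adj a b → T.dist a b ≤ k) {x y : V} (p : G.Walk x y) :
    T.dist x y ≤ k * p.length := by
  induction p with
  | nil => simp
  | @cons a c b hadj p ih =>
    rw [Walk.length_cons, mul_add_one]
    have := h _ _ hadj
    have : T.dist a b ≤ T.dist a c + T.dist c b := hT.dist_triangle
    omega

lemma Connected.dist_le_mul_dist (hG : G.Connected) (hT : T.Connected) {k : ℕ}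
    (h : ∀ a b, G.Adj a b → T.dist a b ≤ k) (x y : V) : T.dist x y ≤ k * G.dist x y := by
  obtain ⟨p, hp⟩ := hG.exists_walk_length_eq_dist x y
  exact hp ▸ hT.dist_le_mul_length h p

lemma dist_add_dist_eq_of_mem_support {a b w : V} {p : G.Walk a b}
    (hp : p.length = G.dist a b) (hw : w ∈ p.support) :
    G.dist a w + G.dist w b = G.dist a b := by
  obtain ⟨q, r, rfl⟩ := Walk.mem_support_iff_exists_append.1 hw
  rw [Walk.length_append] at hp
  have := q.reachable.dist_triangle_left b
  have := dist_le q
  have := dist_le r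
  omega

lemma Connected.adj_or_exists_adj_adj_of_dist_le_three (hG : G.Connected) {x z : V}
    (hxz : x ≠ z) (h : G.dist x z ≤ 3) :
    G.Adj x z ∨ (∃ m, G.Adj x m ∧ G.Adj m z) ∨ ∃ b₁ b₂, G.Adj x b₁ ∧ G.Adj b₁ b₂ ∧ G.Adj b₂ z := by
  obtain ⟨p, hp⟩ := hG.exists_walk_length_eq_dist x z
  rw [← hp] at h
  match p with
  | .nil => exact absurd rfl hxz
  | .cons h₁ .nil => exact .inl h₁
  | .cons h₁ (.cons h₂ .nil) => exact .inr (.inl ⟨_, h₁, h₂⟩)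
  | .cons h₁ (.cons h₂ (.cons h₃ .nil)) => exact .inr (.inr ⟨_, _, h₁, h₂, h₃⟩)
  | .cons _ (.cons _ (.cons _ (.cons _ _))) => simp only [Walk.length_cons] at h; omega

lemma Walk.IsPath.nontrivial_neighborSet {a b m : V} {p : G.Walk a b}
    (hp : p.IsPath) (hm : m ∈ p.support) (hma : m ≠ a) (hmb : m ≠ b) :
    (G.neighborSet m).Nontrivial := by
  obtain ⟨q, r, rfl⟩ := Walk.mem_support_iff_exists_append.1 hm
  have hq : ¬q.Nil := Walk.not_nil_of_ne hma.symm
  have hr : ¬r.Nil := Walk.not_nil_of_ne hmb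
  exact ⟨_, (Walk.adj_penultimate hq).symm, _, Walk.adj_snd hr,
    hp.ne_of_mem_support_of_append (Walk.adj_snd hr).ne' (Walk.getVert_mem_support _ _)
      (Walk.getVert_mem_support _ _)⟩

end Metric

section Tree

variable {T : SimpleGraph V}

lemma IsTree.mem_support_of_dist_add_dist_eq (hT : T.IsTree) {x y w : V}
    (h : T.dist x w + T.dist w y = T.dist x y) (q : T.Walk x y) : w ∈ q.support := by
  classical
  obtain ⟨p₁, hp₁⟩ := hT.connected.exists_walk_length_eq_dist x w
  obtain ⟨p₂, hp₂⟩ := hT.connected.exists_walk_length_eq_dist w y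
  have hp : (p₁.append p₂).IsPath :=
    Walk.isPath_of_length_eq_dist _ (by rw [Walk.length_append, hp₁, hp₂, h])
  have hq : (q.toPath : T.Walk x y) = p₁.append p₂ :=
    congrArg Subtype.val ((hT.isAcyclic.subsingleton_path x y).elim q.toPath ⟨_, hp⟩)
  apply q.support_toPath_subset_support
  rw [hq, Walk.mem_support_append_iff]
  exact Or.inl p₁.end_mem_support

/-- Trees are median graphs: if `w` is between `x` and `y`, it is between `x` and `z` or between
`z` and `y`. -/
lemma IsTree.dist_add_dist_eq_or (hT : T.IsTree) {x y w : V}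
    (h : T.dist x w + T.dist w y = T.dist x y) (z : V) :
    T.dist x w + T.dist w z = T.dist x z ∨ T.dist z w + T.dist w y = T.dist z y := by
  obtain ⟨p₁, hp₁⟩ := hT.connected.exists_walk_length_eq_dist x z
  obtain ⟨p₂, hp₂⟩ := hT.connected.exists_walk_length_eq_dist z y
  have hw := hT.mem_support_of_dist_add_dist_eq h (p₁.append p₂)
  rw [Walk.mem_support_append_iff] at hw
  exact hw.imp (dist_add_dist_eq_of_mem_support hp₁) (dist_add_dist_eq_of_mem_support hp₂)

lemma IsTree.dist_add_dist_eq_of_le (hT : T.IsTree) {x y w w' : V}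
    (h : T.dist x w + T.dist w y = T.dist x y) (h' : T.dist x w' + T.dist w' y = T.dist x y)
    (hle : T.dist x w ≤ T.dist x w') : T.dist w w' + T.dist w' y = T.dist w y := by
  rcases hT.dist_add_dist_eq_or h' w with h'' | h''
  · have hw : T.dist w' w = 0 := by omega
    rw [hT.connected.dist_eq_zero_iff.1 hw]
    simp
  · exact h''

lemma IsTree.eq_of_dist_add_dist_eq (hT : T.IsTree) {x y w w' : V}
    (h : T.dist x w + T.dist w y = T.dist x y) (h' : T.dist x w' + T.dist w' y = T.dist x y)
    (hd : T.dist x w = T.dist x w') : w = w' := by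
  have := hT.dist_add_dist_eq_of_le h h' hd.le
  exact hT.connected.dist_eq_zero_iff.1 (by omega)

end Tree

section Parent

variable {T : SimpleGraph V} {r x y : V}

open Classical in
/-- The neighbour of `x` one step closer to the root `r`, or `x` itself if there is none (in a
connected graph, exactly when `x = r`). -/
noncomputable def parent (T : SimpleGraph V) (r x : V) : V :=
  if h : ∃ y, T.Adj x y ∧ T.dist y r + 1 = T.dist x r then h.choose else x

@[simp]
lemma parent_self : T.parent r r = r := by
  simp [parent]

lemma Connected.adj_parent (hT : T.Connected) (hx : x ≠ r) : T.Adj x (T.parent r x) := by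
  have h := hT.exists_adj_dist_add_one_eq hx
  rw [parent, dif_pos h]
  exact h.choose_spec.1

lemma Connected.dist_parent_add_one (hT : T.Connected) (hx : x ≠ r) :
    T.dist (T.parent r x) r + 1 = T.dist x r := by
  have h := hT.exists_adj_dist_add_one_eq hx
  rw [parent, dif_pos h]
  exact h.choose_spec.2

lemma Connected.dist_parent_eq_one (hT : T.Connected) (hx : x ≠ r) :
    T.dist x (T.parent r x) = 1 :=
  dist_eq_one_iff_adj.2 (hT.adj_parent hx)

lemma Connected.dist_add_dist_parent (hT : T.Connected) (hx : x ≠ r) :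
    T.dist x (T.parent r x) + T.dist (T.parent r x) r = T.dist x r := by
  rw [hT.dist_parent_eq_one hx, add_comm, hT.dist_parent_add_one hx]

lemma IsTree.eq_parent (hT : T.IsTree) (hadj : T.Adj x y)
    (hd : T.dist y r + 1 = T.dist x r) : y = T.parent r x := by
  have hx : x ≠ r := by rintro rfl; simp at hd
  refine hT.eq_of_dist_add_dist_eq (x := x) (y := r) ?_ (hT.connected.dist_add_dist_parent hx) ?_
  · rw [dist_eq_one_iff_adj.2 hadj, add_comm, hd]
  · rw [dist_eq_one_iff_adj.2 hadj, dist_eq_one_iff_adj.2 (hT.connected.adj_parent hx)]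

lemma IsTree.parent_eq_or_parent_eq (hT : T.IsTree) (hadj : T.Adj x y) :
    T.parent r x = y ∨ T.parent r y = x := by
  rcases hT.dist_eq_dist_add_one_of_adj r hadj with h | h
  · exact .inl (hT.eq_parent hadj (by rw [dist_comm, @dist_comm _ _ x]; omega)).symm
  · exact .inr (hT.eq_parent hadj.symm (by rw [dist_comm, @dist_comm _ _ y]; omega)).symm

end Parent

section Depth

variable {T : SimpleGraph V} {u v a b m x y z : V}

/-- The distance from `z` to `{u, v}`; with `T.dist u v ≤ 1`, this is the depth of `z` below a
central vertex (`u = v`) or a central edge (`T.Adj u v`). -/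
noncomputable def depth (T : SimpleGraph V) (u v z : V) : ℕ := min (T.dist z u) (T.dist z v)

lemma exists_dist_eq_depth (T : SimpleGraph V) (u v z : V) :
    ∃ s, (s = u ∨ s = v) ∧ T.dist z s = T.depth u v z := by
  rcases min_choice (T.dist z u) (T.dist z v) with h | h
  · exact ⟨u, .inl rfl, h.symm⟩
  · exact ⟨v, .inr rfl, h.symm⟩

lemma ne_of_one_le_depth (h : 1 ≤ T.depth u v z) : z ≠ u := by
  rintro rfl
  simp [depth] at h

lemma not_mem_of_eq_or_eq {M : Set V} {K : ℕ} (hK : 1 ≤ K) (hM : ∀ z ∈ M, T.depth u v z = K)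
    {s : V} (hs : s = u ∨ s = v) : s ∉ M := fun hsM => by
  have := hM s hsM
  rcases hs with rfl | rfl <;> simp [depth] at this <;> omega

lemma Connected.eq_or_eq_of_depth_eq_zero (hT : T.Connected) (h : T.depth u v z = 0) :
    z = u ∨ z = v := by
  rcases Nat.min_eq_zero_iff.1 h with h | h
  · exact .inl (hT.dist_eq_zero_iff.1 h)
  · exact .inr (hT.dist_eq_zero_iff.1 h)

lemma Connected.dist_le_depth_add_one (hT : T.Connected) (huv : T.dist u v ≤ 1) :
    T.dist z u ≤ T.depth u v z + 1 := by
  have : T.dist z u ≤ T.dist z v + T.dist v u := hT.dist_triangle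
  rw [dist_comm] at huv
  unfold depth
  omega

lemma IsTree.depth_parent_add_one (hT : T.IsTree) (huv : T.dist u v ≤ 1)
    (hz : 1 ≤ T.depth u v z) : T.depth u v (T.parent u z) + 1 = T.depth u v z := by
  have hzu := ne_of_one_le_depth hz
  have hzp := hT.connected.dist_parent_eq_one hzu
  have : T.dist (T.parent u z) z = 1 := by rw [dist_comm, hzp]
  have := hT.connected.dist_parent_add_one hzu
  have : T.dist z v ≤ T.dist z (T.parent u z) + T.dist (T.parent u z) v :=
    hT.connected.dist_triangle
  have : T.dist (T.parent u z) v ≤ T.dist (T.parent u z) z + T.dist z v :=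
    hT.connected.dist_triangle
  have : T.dist z u ≤ T.dist z v + T.dist v u := hT.connected.dist_triangle
  have : T.dist v u = T.dist u v := dist_comm
  unfold depth at hz ⊢
  by_cases hside : T.dist z u ≤ T.dist z v
  · omega
  -- otherwise `v` lies between `z` and `u`, hence also between `T.parent u z` and `u`
  have hv : T.dist z v + T.dist v u = T.dist z u := by omega
  have := hT.dist_add_dist_eq_of_le (hT.connected.dist_add_dist_parent hzu) hv (by omega)
  omega

lemma IsTree.depth_eq_add_one_of_parent_eq (hT : T.IsTree) (huv : T.dist u v ≤ 1)
    (h : T.parent u a = b) (hb : 1 ≤ T.depth u v b) : T.depth u v a = T.depth u v b + 1 := by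
  suffices ha : 1 ≤ T.depth u v a by
    have := hT.depth_parent_add_one huv ha
    rw [h] at this
    omega
  by_contra! ha
  have hbu := ne_of_one_le_depth hb
  rcases hT.connected.eq_or_eq_of_depth_eq_zero (u := u) (v := v) (z := a) (by omega)
    with rfl | rfl
  · exact hbu (by simpa using h.symm)
  · -- `a = v ≠ u` is adjacent to `u`, so its parent is `u`
    have hau : a ≠ u := by rintro rfl; exact hbu (by simpa using h.symm)
    have hadj : T.Adj a u := by
      rw [← dist_eq_one_iff_adj, dist_comm]
      exact le_antisymm huv (hT.connected.pos_dist_of_ne hau.symm)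
    exact hbu (h ▸ (hT.eq_parent hadj (by simp [dist_eq_one_iff_adj.2 hadj])).symm)

lemma IsTree.eq_of_dist_le_one_of_depth_eq (hT : T.IsTree) (huv : T.dist u v ≤ 1)
    (hab : T.dist a b ≤ 1) (h : T.depth u v a = T.depth u v b) (ha : 1 ≤ T.depth u v a) :
    a = b := by
  by_contra hne
  have hadj : T.Adj a b :=
    dist_eq_one_iff_adj.1 (le_antisymm hab (hT.connected.pos_dist_of_ne hne))
  rcases hT.parent_eq_or_parent_eq (r := u) hadj with h' | h'
  · have := hT.depth_eq_add_one_of_parent_eq huv h' (h ▸ ha)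
    omega
  · have := hT.depth_eq_add_one_of_parent_eq huv h' ha
    omega

lemma IsTree.eq_of_depth_eq_of_dist_add_dist_eq (hT : T.IsTree) (huv : T.dist u v ≤ 1)
    (h : T.depth u v a = T.depth u v b) (ha : 1 ≤ T.depth u v a)
    (hma : T.dist m a + T.dist a u = T.dist m u) (hmb : T.dist m b + T.dist b u = T.dist m u) :
    a = b := by
  wlog hle : T.dist m a ≤ T.dist m b generalizing a b
  · exact (this h.symm (h ▸ ha) hmb hma (by omega)).symm
  have hab := hT.dist_add_dist_eq_of_le hma hmb hle
  have := hT.connected.dist_le_depth_add_one (z := a) huv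
  have : T.depth u v b ≤ T.dist b u := min_le_left _ _
  exact hT.eq_of_dist_le_one_of_depth_eq huv (by omega) h ha

/-- Two distinct vertices `a`, `b` of equal positive depth have disjoint subtrees, and the tree
path between vertices strictly below them runs through both. -/
lemma IsTree.four_le_dist_of_dist_add_dist_eq (hT : T.IsTree) (huv : T.dist u v ≤ 1)
    (hab : a ≠ b) (h : T.depth u v a = T.depth u v b) (ha : 1 ≤ T.depth u v a)
    (hx : T.dist x a + T.dist a u = T.dist x u) (hy : T.dist y b + T.dist b u = T.dist y u)
    (hxa : x ≠ a) (hyb : y ≠ b) : 4 ≤ T.dist x y := by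
  have hdisj := fun m h₁ h₂ => hab (hT.eq_of_depth_eq_of_dist_add_dist_eq (m := m) huv h ha h₁ h₂)
  have hx' := (hT.dist_add_dist_eq_or hx y).resolve_right (hdisj y · hy)
  have hy' := (hT.dist_add_dist_eq_or hy a).resolve_right (hdisj a (by simp))
  have : 2 ≤ T.dist a b := by
    by_contra!
    exact hab (hT.eq_of_dist_le_one_of_depth_eq huv (by omega) h ha)
  have : 1 ≤ T.dist x a := hT.connected.pos_dist_of_ne hxa
  have : 1 ≤ T.dist y b := hT.connected.pos_dist_of_ne hyb
  have : T.dist a y = T.dist y a := dist_comm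
  have : T.dist b a = T.dist a b := dist_comm
  omega

end Depth

section Rehang

variable {G T : SimpleGraph V} {M : Set V} {f : V → V} {a b x y : V}

def rehang (T : SimpleGraph V) (M : Set V) (f : V → V) : SimpleGraph V :=
  fromRel fun a b => T.Adj a b ∧ a ∉ M ∧ b ∉ M ∨ a ∈ M ∧ b = f a

lemma rehang_adj_of_mem (hf : ∀ x ∈ M, f x ∉ M) (hx : x ∈ M) : (T.rehang M f).Adj x (f x) :=
  (fromRel_adj ..).2 ⟨fun h => hf x hx (h ▸ hx), .inl (.inr ⟨hx, rfl⟩)⟩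

lemma eq_of_rehang_adj_of_mem (hf : ∀ x ∈ M, f x ∉ M) (hx : x ∈ M)
    (h : (T.rehang M f).Adj x y) : y = f x := by
  rcases ((fromRel_adj ..).1 h).2 with (⟨-, hx', -⟩ | ⟨-, rfl⟩) | (⟨-, -, hx'⟩ | ⟨hy, rfl⟩)
  · exact absurd hx hx'
  · rfl
  · exact absurd hx hx'
  · exact absurd hx (hf y hy)

lemma rehang_adj_of_adj (h : T.Adj a b) (ha : a ∉ M) (hb : b ∉ M) : (T.rehang M f).Adj a b :=
  (fromRel_adj ..).2 ⟨h.ne, .inl (.inl ⟨h, ha, hb⟩)⟩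

lemma adj_of_rehang_adj (h : (T.rehang M f).Adj a b) (ha : a ∉ M) (hb : b ∉ M) : T.Adj a b := by
  rcases ((fromRel_adj ..).1 h).2 with (⟨h, -⟩ | ⟨ha', -⟩) | (⟨h, -⟩ | ⟨hb', -⟩)
  · exact h
  · exact absurd ha' ha
  · exact h.symm
  · exact absurd hb' hb

lemma rehang_le (hTG : T ≤ G) (hfG : ∀ x ∈ M, G.Adj x (f x)) : T.rehang M f ≤ G := by
  intro a b h
  rcases ((fromRel_adj ..).1 h).2 with (⟨h, -⟩ | ⟨ha, rfl⟩) | (⟨h, -⟩ | ⟨hb, rfl⟩)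
  · exact hTG h
  · exact hfG a ha
  · exact hTG h.symm
  · exact (hfG b hb).symm

lemma IsTree.exists_rehang_walk (hT : T.IsTree) (hM : ∀ x ∈ M, (T.neighborSet x).Subsingleton)
    (ha : a ∉ M) (hb : b ∉ M) : ∃ p : (T.rehang M f).Walk a b, p.length = T.dist a b := by
  obtain ⟨p, hp, hlen⟩ := hT.connected.exists_path_of_dist a b
  have hsupp : ∀ w ∈ p.support, w ∉ M := by
    intro w hw hwM
    have hwa : w ≠ a := by rintro rfl; exact ha hwM
    have hwb : w ≠ b := by rintro rfl; exact hb hwM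
    exact (hp.nontrivial_neighborSet hw hwa hwb).not_subsingleton (hM w hwM)
  refine ⟨p.transfer _ fun e he => ?_, by rw [Walk.length_transfer, hlen]⟩
  induction e with
  | h x y =>
    exact rehang_adj_of_adj (p.adj_of_mem_edges he) (hsupp x (p.fst_mem_support_of_mem_edges he))
      (hsupp y (p.snd_mem_support_of_mem_edges he))

lemma IsTree.rehang_dist_le (hT : T.IsTree) (hM : ∀ x ∈ M, (T.neighborSet x).Subsingleton)
    (ha : a ∉ M) (hb : b ∉ M) : (T.rehang M f).dist a b ≤ T.dist a b := by
  obtain ⟨p, hp⟩ := hT.exists_rehang_walk (f := f) hM ha hb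
  exact hp ▸ dist_le p

lemma IsTree.rehang_isTree (hT : T.IsTree) (hM : ∀ x ∈ M, (T.neighborSet x).Subsingleton)
    (hf : ∀ x ∈ M, f x ∉ M) : (T.rehang M f).IsTree := by
  classical
  have hout : ∀ x, ∃ y ∉ M, (T.rehang M f).Reachable x y := fun x => by
    by_cases hx : x ∈ M
    · exact ⟨f x, hf x hx, (rehang_adj_of_mem hf hx).reachable⟩
    · exact ⟨x, hx, .rfl⟩
  refine ⟨(connected_iff _).2 ⟨fun x y => ?_, hT.connected.nonempty⟩, fun x c hc => ?_⟩
  · obtain ⟨x', hx', hxx'⟩ := hout x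
    obtain ⟨y', hy', hyy'⟩ := hout y
    obtain ⟨p, -⟩ := hT.exists_rehang_walk (f := f) hM hx' hy'
    exact hxx'.trans (p.reachable.trans hyy'.symm)
  by_cases hcM : ∃ m ∈ c.support, m ∈ M
  · -- both neighbours of `m` on the cycle would be `f m`
    obtain ⟨m, hmc, hm⟩ := hcM
    have hc' := hc.rotate hmc
    exact hc'.snd_ne_penultimate <|
      (eq_of_rehang_adj_of_mem hf hm (Walk.adj_snd hc'.not_nil)).trans
      (eq_of_rehang_adj_of_mem hf hm (Walk.adj_penultimate hc'.not_nil).symm).symm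
  · push Not at hcM
    have hE : ∀ e ∈ c.edges, e ∈ T.edgeSet := fun e he => by
      induction e with
      | h x y =>
        exact adj_of_rehang_adj (c.adj_of_mem_edges he) (hcM x (c.fst_mem_support_of_mem_edges he))
          (hcM y (c.snd_mem_support_of_mem_edges he))
    exact hT.isAcyclic (c.transfer T hE) (hc.transfer hE)

end Rehang

structure IsCenteredTree (T : SimpleGraph V) (u v : V) (K : ℕ) : Prop where
  isTree : T.IsTree
  dist_le_one : T.dist u v ≤ 1
  depth_le : ∀ z, T.depth u v z ≤ K

section Deep

variable {G T : SimpleGraph V} {u v a b x y z : V} {K : ℕ}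

local notation "π" => T.parent u

lemma IsTree.dist_grandparent_le_two (hT : T.IsTree) (huv : T.dist u v ≤ 1)
    (hz : 2 ≤ T.depth u v z) : T.dist z (π (π z)) ≤ 2 := by
  have := hT.depth_parent_add_one huv (z := z) (by omega)
  have := hT.connected.dist_parent_eq_one (ne_of_one_le_depth (show 1 ≤ T.depth u v z by omega))
  have := hT.connected.dist_parent_eq_one
    (ne_of_one_le_depth (show 1 ≤ T.depth u v (π z) by omega))
  have : T.dist z (π (π z)) ≤ T.dist z (π z) + T.dist (π z) (π (π z)) := hT.connected.dist_triangle
  omega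

namespace IsCenteredTree

lemma adj_eq_parent (hC : T.IsCenteredTree u v K) (hK : 1 ≤ K) (hz : T.depth u v z = K)
    (hzy : T.Adj z y) : y = π z := by
  rcases hC.isTree.parent_eq_or_parent_eq (r := u) hzy with h | h
  · exact h.symm
  · have := hC.isTree.depth_eq_add_one_of_parent_eq hC.dist_le_one h (by omega)
    have := hC.depth_le y
    omega

lemma dist_eq_dist_parent_add_one (hC : T.IsCenteredTree u v K) (hK : 1 ≤ K)
    (hz : T.depth u v z = K) (hzy : z ≠ y) : T.dist z y = T.dist (π z) y + 1 := by
  obtain ⟨m, hzm, hmy⟩ := hC.isTree.connected.exists_adj_dist_add_one_eq hzy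
  rw [← hC.adj_eq_parent hK hz hzm, hmy]

lemma eq_or_parent_eq_of_dist_le_three (hC : T.IsCenteredTree u v K) (hK : 2 ≤ K)
    (hz : T.depth u v z = K) (hzy : z ≠ y) (hy : T.dist z y ≤ 3) :
    y = π z ∨ y = π (π z) ∨ y = π (π (π z)) ∨ π y = π z ∨ π y = π (π z) := by
  have hT := hC.isTree
  have hq := hC.dist_eq_dist_parent_add_one (by omega) hz hzy
  have hdq := hT.depth_parent_add_one hC.dist_le_one (z := z) (by omega)
  rcases (by omega : T.dist (π z) y = 0 ∨ T.dist (π z) y = 1 ∨ T.dist (π z) y = 2)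
    with h | h | h
  · exact .inl (hT.connected.dist_eq_zero_iff.1 h).symm
  · rcases hT.parent_eq_or_parent_eq (r := u) (dist_eq_one_iff_adj.1 h) with h' | h'
    · exact .inr (.inl h'.symm)
    · exact .inr (.inr (.inr (.inl h')))
  · obtain ⟨m, hqm, hmy⟩ := hT.connected.exists_adj_dist_add_one_eq (x := π z) (y := y)
      (by rintro rfl; simp at h)
    have hmy' : T.Adj m y := dist_eq_one_iff_adj.1 (by omega)
    rcases hT.parent_eq_or_parent_eq (r := u) hqm with rfl | hm
    · rcases hT.parent_eq_or_parent_eq (r := u) hmy' with h' | h'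
      · exact .inr (.inr (.inl h'.symm))
      · exact .inr (.inr (.inr (.inr h')))
    · -- then `m` is a sibling of `z`, hence a leaf whose only neighbour is `π z`
      have hdm := hT.depth_eq_add_one_of_parent_eq hC.dist_le_one hm (by omega)
      have := hC.adj_eq_parent (by omega) (by omega) hmy'
      rw [hm] at this
      subst this
      simp at h

lemma parent_eq_of_dist_le_three (hC : T.IsCenteredTree u v K) (hK : 2 ≤ K)
    (ha : T.depth u v a = K) (hb : T.depth u v b = K) (hab : a ≠ b) (h : T.dist a b ≤ 3) :
    π a = π b := by
  have hda := hC.isTree.depth_parent_add_one hC.dist_le_one (z := a) (by omega)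
  have hdb := hC.isTree.depth_parent_add_one hC.dist_le_one (z := b) (by omega)
  have e₁ := hC.dist_eq_dist_parent_add_one (by omega) ha hab
  have e₂ := hC.dist_eq_dist_parent_add_one (by omega) hb (y := π a) (by rintro rfl; omega)
  rw [dist_comm] at e₂
  exact (hC.isTree.eq_of_dist_le_one_of_depth_eq hC.dist_le_one (by omega) (by omega)
    (by omega)).symm

lemma dist_add_dist_grandparent_of_adj (hC : T.IsCenteredTree u v K) (hK : 3 ≤ K)
    (hsp : ∀ a b, G.Adj a b → T.dist a b ≤ 3) (hx : T.depth u v x = K)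
    (hxg : ¬G.Adj x (π (π x))) (hxh : ¬G.Adj x (π (π (π x)))) (hxy : G.Adj x y) :
    T.dist y (π (π x)) + T.dist (π (π x)) u = T.dist y u := by
  have hT := hC.isTree
  have hdq := hT.depth_parent_add_one hC.dist_le_one (z := x) (by omega)
  have hq := hT.connected.dist_add_dist_parent
    (ne_of_one_le_depth (show 1 ≤ T.depth u v (π x) by omega))
  rcases hC.eq_or_parent_eq_of_dist_le_three (by omega) hx hxy.ne (hsp _ _ hxy)
    with rfl | rfl | rfl | h | h
  · exact hq
  · exact absurd hxy hxg
  · exact absurd hxy hxh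
  · have hdy := hT.depth_eq_add_one_of_parent_eq hC.dist_le_one h (by omega)
    have hy := hT.connected.dist_add_dist_parent
      (ne_of_one_le_depth (show 1 ≤ T.depth u v y by omega))
    rw [h] at hy
    have : T.dist y (π (π x)) ≤ T.dist y (π x) + T.dist (π x) (π (π x)) :=
      hT.connected.dist_triangle
    have : T.dist y u ≤ T.dist y (π (π x)) + T.dist (π (π x)) u := hT.connected.dist_triangle
    omega
  · have hdg := hT.depth_parent_add_one hC.dist_le_one (z := π x) (by omega)
    have hdy := hT.depth_eq_add_one_of_parent_eq hC.dist_le_one h (by omega)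
    have hy := hT.connected.dist_add_dist_parent
      (ne_of_one_le_depth (show 1 ≤ T.depth u v y by omega))
    rwa [h] at hy

/-- Both leaves have all their `G`-neighbours in the subtrees of their grandparents; if these
differ, the subtrees are disjoint and a `G`-edge from one to the other (strictly below the
grandparents) is stretched to length at least `4` in `T`, so `x` and `z` would be more than `3`
apart in `G`. -/
lemma grandparent_eq_of_not_adj (hC : T.IsCenteredTree u v K) (hK : 3 ≤ K) (hG : G.Connected)
    (hdiam : ∀ x y, G.dist x y ≤ 3) (hsp : ∀ a b, G.Adj a b → T.dist a b ≤ 3)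
    (hx : T.depth u v x = K) (hxg : ¬G.Adj x (π (π x))) (hxh : ¬G.Adj x (π (π (π x))))
    (hz : T.depth u v z = K) (hzg : ¬G.Adj z (π (π z))) (hzh : ¬G.Adj z (π (π (π z)))) :
    π (π x) = π (π z) := by
  have hT := hC.isTree
  by_contra hne
  have hxz : x ≠ z := by rintro rfl; exact hne rfl
  have hdx := hT.depth_parent_add_one hC.dist_le_one (z := x) (by omega)
  have hdgx := hT.depth_parent_add_one hC.dist_le_one (z := π x) (by omega)
  have hdz := hT.depth_parent_add_one hC.dist_le_one (z := z) (by omega)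
  have hdgz := hT.depth_parent_add_one hC.dist_le_one (z := π z) (by omega)
  have hbelow_x := fun {y} => hC.dist_add_dist_grandparent_of_adj (y := y) hK hsp hx hxg hxh
  have hbelow_z := fun {y} => hC.dist_add_dist_grandparent_of_adj (y := y) hK hsp hz hzg hzh
  rcases hG.adj_or_exists_adj_adj_of_dist_le_three hxz (hdiam x z)
    with h | ⟨m, h₁, h₂⟩ | ⟨b₁, b₂, h₁, h₂, h₃⟩
  · exact hne (by rw [hC.parent_eq_of_dist_le_three (by omega) hx hz hxz (hsp _ _ h)])
  · exact hne (hT.eq_of_depth_eq_of_dist_add_dist_eq hC.dist_le_one (by omega) (by omega)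
      (hbelow_x h₁) (hbelow_z h₂.symm))
  have := hT.four_le_dist_of_dist_add_dist_eq hC.dist_le_one hne (by omega) (by omega)
    (hbelow_x h₁) (hbelow_z h₃.symm) (by rintro rfl; exact hxg h₁)
    (by rintro rfl; exact hzg h₃.symm)
  have := hsp _ _ h₂
  omega

lemma exists_forall_adj_grandparent_or (hC : T.IsCenteredTree u v K) (hK : 3 ≤ K)
    (hG : G.Connected) (hdiam : ∀ x y, G.dist x y ≤ 3) (hsp : ∀ a b, G.Adj a b → T.dist a b ≤ 3) :
    ∃ g₀, ∀ z, T.depth u v z = K → π (π z) ≠ g₀ →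
      G.Adj z (π (π z)) ∨ G.Adj z (π (π (π z))) := by
  by_cases h : ∃ x, T.depth u v x = K ∧ ¬G.Adj x (π (π x)) ∧ ¬G.Adj x (π (π (π x)))
  · obtain ⟨x, hx, hxg, hxh⟩ := h
    refine ⟨π (π x), fun z hz hne => ?_⟩
    by_contra! hz'
    exact hne (hC.grandparent_eq_of_not_adj hK hG hdiam hsp hz hz'.1 hz'.2 hx hxg hxh)
  · push Not at h
    exact ⟨u, fun z hz _ => or_iff_not_imp_left.2 (h z hz)⟩

lemma neighborSet_subsingleton (hC : T.IsCenteredTree u v K) (hK : 1 ≤ K)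
    (hz : T.depth u v z = K) : (T.neighborSet z).Subsingleton := fun _ hy _ hy' =>
  (hC.adj_eq_parent hK hz hy).trans (hC.adj_eq_parent hK hz hy').symm

section Rehang

variable {M : Set V} {f : V → V}

lemma depth_add_two_le (hC : T.IsCenteredTree u v K) (hK : 3 ≤ K) (hz : T.depth u v z = K)
    (hw : a = π (π z) ∨ a = π (π (π z))) : T.depth u v a + 2 ≤ K := by
  have hT := hC.isTree
  have := hT.depth_parent_add_one hC.dist_le_one (z := z) (by omega)
  have := hT.depth_parent_add_one hC.dist_le_one (z := π z) (by omega)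
  have := hT.depth_parent_add_one hC.dist_le_one (z := π (π z)) (by omega)
  rcases hw with rfl | rfl <;> omega

lemma dist_grandparent_le_one (hC : T.IsCenteredTree u v K) (hK : 3 ≤ K)
    (hz : T.depth u v z = K) (hw : a = π (π z) ∨ a = π (π (π z))) : T.dist a (π (π z)) ≤ 1 := by
  have hT := hC.isTree
  have := hT.depth_parent_add_one hC.dist_le_one (z := z) (by omega)
  have := hT.depth_parent_add_one hC.dist_le_one (z := π z) (by omega)
  rcases hw with rfl | rfl
  · simp
  · rw [dist_comm, hT.connected.dist_parent_eq_one (ne_of_one_le_depth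
      (show 1 ≤ T.depth u v (π (π z)) by omega))]

lemma apply_not_mem (hC : T.IsCenteredTree u v K) (hK : 3 ≤ K)
    (hM : ∀ z ∈ M, T.depth u v z = K) (hf : ∀ z ∈ M, f z = π (π z) ∨ f z = π (π (π z))) :
    ∀ z ∈ M, f z ∉ M := fun z hz hfz => by
  have := hC.depth_add_two_le hK (hM z hz) (hf z hz)
  have := hM _ hfz
  omega

lemma rehang_dist_le (hC : T.IsCenteredTree u v K) (hK : 1 ≤ K)
    (hM : ∀ z ∈ M, T.depth u v z = K) (ha : a ∉ M) (hb : b ∉ M) :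
    (T.rehang M f).dist a b ≤ T.dist a b :=
  hC.isTree.rehang_dist_le (fun z hz => hC.neighborSet_subsingleton hK (hM z hz)) ha hb

lemma isTree_rehang (hC : T.IsCenteredTree u v K) (hK : 3 ≤ K)
    (hM : ∀ z ∈ M, T.depth u v z = K) (hf : ∀ z ∈ M, f z = π (π z) ∨ f z = π (π (π z))) :
    (T.rehang M f).IsTree :=
  hC.isTree.rehang_isTree (fun z hz => hC.neighborSet_subsingleton (by omega) (hM z hz))
    (hC.apply_not_mem hK hM hf)

lemma dist_grandparent_le_one_of_adj (hC : T.IsCenteredTree u v K) (hK : 3 ≤ K)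
    (hsp : ∀ a b, G.Adj a b → T.dist a b ≤ 3) (hz : T.depth u v z = K) (hzy : G.Adj z y)
    (hy : π y ≠ π z) : T.dist (π (π z)) y ≤ 1 := by
  have hT := hC.isTree
  have hdq := hT.depth_parent_add_one hC.dist_le_one (z := z) (by omega)
  have hdg := hT.depth_parent_add_one hC.dist_le_one (z := π z) (by omega)
  rcases hC.eq_or_parent_eq_of_dist_le_three (by omega) hz hzy.ne (hsp _ _ hzy)
    with rfl | rfl | rfl | h | h
  · rw [dist_comm, hT.connected.dist_parent_eq_one (ne_of_one_le_depth
      (show 1 ≤ T.depth u v (π z) by omega))]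
  · simp
  · rw [hT.connected.dist_parent_eq_one (ne_of_one_le_depth
      (show 1 ≤ T.depth u v (π (π z)) by omega))]
  · exact absurd h hy
  · have := hT.depth_eq_add_one_of_parent_eq hC.dist_le_one h (by omega)
    rw [dist_comm, ← h, hT.connected.dist_parent_eq_one (ne_of_one_le_depth
      (show 1 ≤ T.depth u v y by omega))]

lemma rehang_dist_le_three_of_mem_of_not_mem (hC : T.IsCenteredTree u v K) (hK : 3 ≤ K)
    (hsp : ∀ a b, G.Adj a b → T.dist a b ≤ 3) (hM : ∀ z ∈ M, T.depth u v z = K)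
    (hf : ∀ z ∈ M, f z = π (π z) ∨ f z = π (π (π z))) (hsib : ∀ a ∈ M, ∀ b, π b = π a → b ∈ M)
    (ha : a ∈ M) (hb : b ∉ M) (hab : G.Adj a b) : (T.rehang M f).dist a b ≤ 3 := by
  have hfM := hC.apply_not_mem hK hM hf
  have := hC.dist_grandparent_le_one_of_adj hK hsp (hM a ha) hab fun h => hb (hsib a ha b h)
  have := hC.dist_grandparent_le_one hK (hM a ha) (hf a ha)
  have := hC.rehang_dist_le (f := f) (by omega) hM (hfM a ha) hb
  have : (T.rehang M f).dist a (f a) = 1 := dist_eq_one_iff_adj.2 (rehang_adj_of_mem hfM ha)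
  have : T.dist (f a) b ≤ T.dist (f a) (π (π a)) + T.dist (π (π a)) b :=
    hC.isTree.connected.dist_triangle
  have : (T.rehang M f).dist a b ≤ (T.rehang M f).dist a (f a) + (T.rehang M f).dist (f a) b :=
    (hC.isTree_rehang hK hM hf).connected.dist_triangle
  omega

/-- Deep siblings are both moved to `π (π a)` or `π (π (π a))`, which are adjacent. -/
lemma rehang_dist_le_three_of_mem_of_mem (hC : T.IsCenteredTree u v K) (hK : 3 ≤ K)
    (hsp : ∀ a b, G.Adj a b → T.dist a b ≤ 3) (hM : ∀ z ∈ M, T.depth u v z = K)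
    (hf : ∀ z ∈ M, f z = π (π z) ∨ f z = π (π (π z))) (ha : a ∈ M) (hb : b ∈ M)
    (hab : G.Adj a b) : (T.rehang M f).dist a b ≤ 3 := by
  have hfM := hC.apply_not_mem hK hM hf
  have hT' := (hC.isTree_rehang hK hM hf).connected
  have hpar := hC.parent_eq_of_dist_le_three (by omega) (hM a ha) (hM b hb) hab.ne (hsp _ _ hab)
  have hfab : T.dist (f a) (f b) ≤ 1 := by
    have := hC.dist_grandparent_le_one hK (hM a ha) (.inr rfl)
    have : T.dist (π (π a)) (π (π (π a))) = T.dist (π (π (π a))) (π (π a)) := dist_comm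
    rcases hf a ha with h₁ | h₁ <;> rcases hf b hb with h₂ | h₂ <;>
      rw [h₁, h₂, ← hpar] <;> first | omega | simp
  have := hC.rehang_dist_le (f := f) (by omega) hM (hfM a ha) (hfM b hb)
  have : (T.rehang M f).dist a (f a) = 1 := dist_eq_one_iff_adj.2 (rehang_adj_of_mem hfM ha)
  have : (T.rehang M f).dist b (f b) = 1 := dist_eq_one_iff_adj.2 (rehang_adj_of_mem hfM hb)
  have : (T.rehang M f).dist a b ≤ (T.rehang M f).dist a (f a) + (T.rehang M f).dist (f a) b :=
    hT'.dist_triangle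
  have : (T.rehang M f).dist (f a) b ≤ (T.rehang M f).dist (f a) (f b) +
    (T.rehang M f).dist (f b) b := hT'.dist_triangle
  have : (T.rehang M f).dist (f b) b = (T.rehang M f).dist b (f b) := dist_comm
  omega

lemma rehang_dist_le_three (hC : T.IsCenteredTree u v K) (hK : 3 ≤ K)
    (hsp : ∀ a b, G.Adj a b → T.dist a b ≤ 3) (hM : ∀ z ∈ M, T.depth u v z = K)
    (hf : ∀ z ∈ M, f z = π (π z) ∨ f z = π (π (π z))) (hsib : ∀ a ∈ M, ∀ b, π b = π a → b ∈ M)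
    (hab : G.Adj a b) : (T.rehang M f).dist a b ≤ 3 := by
  by_cases ha : a ∈ M <;> by_cases hb : b ∈ M
  · exact hC.rehang_dist_le_three_of_mem_of_mem hK hsp hM hf ha hb hab
  · exact hC.rehang_dist_le_three_of_mem_of_not_mem hK hsp hM hf hsib ha hb hab
  · rw [dist_comm]
    exact hC.rehang_dist_le_three_of_mem_of_not_mem hK hsp hM hf hsib hb ha hab.symm
  · exact (hC.rehang_dist_le (by omega) hM ha hb).trans (hsp _ _ hab)

lemma rehang_dist_le_dist (hC : T.IsCenteredTree u v K) (hK : 1 ≤ K)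
    (hM : ∀ z ∈ M, T.depth u v z = K) {s s' : V} (hs : s = u ∨ s = v) (hs' : s' = u ∨ s' = v) :
    (T.rehang M f).dist s s' ≤ T.dist u v := by
  refine (hC.rehang_dist_le hK hM (not_mem_of_eq_or_eq hK hM hs)
    (not_mem_of_eq_or_eq hK hM hs')).trans ?_
  rcases hs with rfl | rfl <;> rcases hs' with rfl | rfl <;> simp [dist_comm]

lemma exists_rehang_dist_le (hC : T.IsCenteredTree u v K) (hK : 3 ≤ K)
    (hM : ∀ z ∈ M, T.depth u v z = K) (hf : ∀ z ∈ M, f z = π (π z) ∨ f z = π (π (π z)))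
    (z : V) : ∃ s, (s = u ∨ s = v) ∧ (T.rehang M f).dist z s ≤ K ∧
      (¬(T.depth u v z = K ∧ z ∉ M) → (T.rehang M f).dist z s < K) := by
  have hfM := hC.apply_not_mem hK hM hf
  by_cases hz : z ∈ M
  · obtain ⟨s, hs, hds⟩ := T.exists_dist_eq_depth u v (f z)
    have := hC.depth_add_two_le hK (hM z hz) (hf z hz)
    have := hC.rehang_dist_le (f := f) (by omega) hM (hfM z hz)
      (not_mem_of_eq_or_eq (by omega) hM hs)
    have : (T.rehang M f).dist z (f z) = 1 := dist_eq_one_iff_adj.2 (rehang_adj_of_mem hfM hz)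
    have : (T.rehang M f).dist z s ≤ (T.rehang M f).dist z (f z) + (T.rehang M f).dist (f z) s :=
      (hC.isTree_rehang hK hM hf).connected.dist_triangle
    exact ⟨s, hs, by omega, fun _ => by omega⟩
  · obtain ⟨s, hs, hds⟩ := T.exists_dist_eq_depth u v z
    have := hC.rehang_dist_le (f := f) (by omega) hM hz (not_mem_of_eq_or_eq (by omega) hM hs)
    have := hC.depth_le z
    exact ⟨s, hs, by omega, fun h => by have := mt (⟨·, hz⟩) h; omega⟩

lemma rehang_dist_add_one_le (hC : T.IsCenteredTree u v K) (hK : 3 ≤ K)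
    (hM : ∀ z ∈ M, T.depth u v z = K) (hf : ∀ z ∈ M, f z = π (π z) ∨ f z = π (π (π z)))
    {g₀ : V} (hkept : ∀ z, T.depth u v z = K → z ∉ M → π (π z) = g₀) (x y : V) :
    (T.rehang M f).dist x y + 1 ≤ 2 * K + T.dist u v := by
  by_cases hxy : (T.depth u v x = K ∧ x ∉ M) ∧ (T.depth u v y = K ∧ y ∉ M)
  · -- two deep vertices left in place are grandchildren of `g₀`
    obtain ⟨⟨hx, hxM⟩, hy, hyM⟩ := hxy
    have hT := hC.isTree
    have := hT.dist_grandparent_le_two hC.dist_le_one (z := x) (by omega)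
    have := hT.dist_grandparent_le_two hC.dist_le_one (z := y) (by omega)
    rw [hkept x hx hxM] at *
    rw [hkept y hy hyM] at *
    have := hC.rehang_dist_le (f := f) (by omega) hM hxM hyM
    have : T.dist x y ≤ T.dist x g₀ + T.dist g₀ y := hT.connected.dist_triangle
    have : T.dist g₀ y = T.dist y g₀ := dist_comm
    omega
  have hT' := (hC.isTree_rehang hK hM hf).connected
  obtain ⟨sx, hsx, hx₁, hx₂⟩ := hC.exists_rehang_dist_le hK hM hf x
  obtain ⟨sy, hsy, hy₁, hy₂⟩ := hC.exists_rehang_dist_le hK hM hf y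
  have := hC.rehang_dist_le_dist (f := f) (by omega) hM hsx hsy
  have : (T.rehang M f).dist x y ≤ (T.rehang M f).dist x sx + (T.rehang M f).dist sx y :=
    hT'.dist_triangle
  have : (T.rehang M f).dist sx y ≤ (T.rehang M f).dist sx sy + (T.rehang M f).dist sy y :=
    hT'.dist_triangle
  have : (T.rehang M f).dist sy y = (T.rehang M f).dist y sy := dist_comm
  rcases not_and_or.1 hxy with h | h
  · have := hx₂ h
    omega
  · have := hy₂ h
    omega

end Rehang

end IsCenteredTree

/-- `T` is a tree `t`-spanner of `G`, stated on edges; by `Connected.dist_le_mul_dist` this gives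
`T.dist x y ≤ t * G.dist x y` for all `x y`. -/
structure IsTreeSpanner (G T : SimpleGraph V) (t : ℕ) : Prop where
  le : T ≤ G
  isTree : T.IsTree
  dist_le_of_adj : ∀ a b, G.Adj a b → T.dist a b ≤ t

/-- The surgery: every leaf of depth `K` whose grandparent is not `g₀` is re-hung on its
grandparent or great-grandparent, whichever is a `G`-neighbour. -/
lemma IsTreeSpanner.exists_dist_add_one_le (hT : G.IsTreeSpanner T 3) (hK : 3 ≤ K)
    (hG : G.Connected) (hdiam : ∀ x y, G.dist x y ≤ 3) (huv : T.dist u v ≤ 1)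
    (hdepth : ∀ z, T.depth u v z ≤ K) :
    ∃ T', G.IsTreeSpanner T' 3 ∧ ∀ x y, T'.dist x y + 1 ≤ 2 * K + T.dist u v := by
  classical
  have hC : T.IsCenteredTree u v K := ⟨hT.isTree, huv, hdepth⟩
  obtain ⟨g₀, hg₀⟩ := hC.exists_forall_adj_grandparent_or hK hG hdiam hT.dist_le_of_adj
  let M := {z | T.depth u v z = K ∧ π (π z) ≠ g₀}
  let f z := if G.Adj z (π (π z)) then π (π z) else π (π (π z))
  have hM : ∀ z ∈ M, T.depth u v z = K := fun z hz => hz.1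
  have hf : ∀ z ∈ M, f z = π (π z) ∨ f z = π (π (π z)) := fun z _ => by
    unfold f
    split_ifs <;> simp
  have hfG : ∀ z ∈ M, G.Adj z (f z) := fun z hz => by
    unfold f
    split_ifs with h
    · exact h
    · exact (hg₀ z hz.1 hz.2).resolve_left h
  have hsib : ∀ a ∈ M, ∀ b, π b = π a → b ∈ M := fun a ha b h => by
    have := hT.isTree.depth_parent_add_one huv (z := a) (by rw [ha.1]; omega)
    have := hT.isTree.depth_eq_add_one_of_parent_eq huv h (by rw [ha.1] at this; omega)
    exact ⟨by rw [← ha.1]; omega, by rw [h]; exact ha.2⟩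
  refine ⟨T.rehang M f, ⟨rehang_le hT.le hfG, hC.isTree_rehang hK hM hf,
    fun a b hab => hC.rehang_dist_le_three hK hT.dist_le_of_adj hM hf hsib hab⟩,
    hC.rehang_dist_add_one_le hK hM hf fun z hz hzM => not_not.1 fun h => hzM ⟨hz, h⟩⟩

end Deep

variable {G T : SimpleGraph V}

lemma IsTree.exists_depth_le (hT : T.IsTree) {a b : V} {K e : ℕ} (he : e ≤ 1)
    (hab : T.dist a b = 2 * K + e) (hmax : ∀ x y, T.dist x y ≤ 2 * K + e) :
    ∃ u v, T.dist u v = e ∧ ∀ z, T.depth u v z ≤ K := by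
  obtain ⟨u, hau, hu⟩ := hT.connected.exists_dist_eq_of_le (a := a) (b := b) (k := K) (by omega)
  obtain ⟨v, hav, hv⟩ :=
    hT.connected.exists_dist_eq_of_le (a := a) (b := b) (k := K + e) (by omega)
  have huv := hT.dist_add_dist_eq_of_le hu hv (by omega)
  refine ⟨u, v, by omega, fun z => ?_⟩
  have hne : e = 0 ∨ T.dist z u ≠ T.dist z v := by
    by_cases he : e = 0
    · exact .inl he
    · exact .inr (hT.dist_ne_of_adj z (dist_eq_one_iff_adj.1 (by omega)))
  have := hmax a z
  have := hmax z b
  have : T.dist u z = T.dist z u := dist_comm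
  have : T.dist v z = T.dist z v := dist_comm
  unfold depth
  rcases hT.dist_add_dist_eq_or hu z with h₁ | h₁ <;>
    rcases hT.dist_add_dist_eq_or hv z with h₂ | h₂ <;> omega

lemma IsTreeSpanner.exists_dist_lt (hT : G.IsTreeSpanner T 3) (hG : G.Connected)
    (hdiam : ∀ x y, G.dist x y ≤ 3) {D : ℕ} (hD : 6 ≤ D) (hTD : ∀ x y, T.dist x y ≤ D) :
    ∃ T', G.IsTreeSpanner T' 3 ∧ ∀ x y, T'.dist x y < D := by
  by_cases h : ∀ x y, T.dist x y < D
  · exact ⟨T, hT, h⟩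
  push Not at h
  obtain ⟨a, b, hab⟩ := h
  obtain ⟨u, v, huv, hdepth⟩ :=
    hT.isTree.exists_depth_le (a := a) (b := b) (K := D / 2) (e := D % 2) (by omega)
    (by have := hTD a b; omega) fun x y => by have := hTD x y; omega
  obtain ⟨T', hT', hT'D⟩ := hT.exists_dist_add_one_le (by omega) hG hdiam (by omega) hdepth
  exact ⟨T', hT', fun x y => by have := hT'D x y; omega⟩

lemma IsTreeSpanner.exists_dist_le_five (hT : G.IsTreeSpanner T 3) (hG : G.Connected)
    (hdiam : ∀ x y, G.dist x y ≤ 3) {D : ℕ} (hTD : ∀ x y, T.dist x y ≤ D) :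
    ∃ T', G.IsTreeSpanner T' 3 ∧ ∀ x y, T'.dist x y ≤ 5 := by
  induction D generalizing T with
  | zero => exact ⟨T, hT, fun x y => (hTD x y).trans (Nat.zero_le 5)⟩
  | succ D ih =>
    by_cases hD : D + 1 ≤ 5
    · exact ⟨T, hT, fun x y => (hTD x y).trans hD⟩
    obtain ⟨T', hT', hlt⟩ := hT.exists_dist_lt hG hdiam (by omega) hTD
    exact ih hT' fun x y => Nat.lt_succ_iff.1 (hlt x y)

end SimpleGraph

theorem stmt_10_general {V : Type*} (G : SimpleGraph V)
    (hG : G.Connected) (hdiam : ∀ x y : V, G.dist x y ≤ 3)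
    (h : ∃ T : SimpleGraph V, T ≤ G ∧ T.IsTree ∧
      ∀ x y : V, T.dist x y ≤ 3 * G.dist x y) :
    ∃ T : SimpleGraph V, T ≤ G ∧ T.IsTree ∧
      (∀ x y : V, T.dist x y ≤ 3 * G.dist x y) ∧
      (∀ x y : V, T.dist x y ≤ 5) := by
  obtain ⟨T, hTG, hT, hsp⟩ := h
  have hT₃ : G.IsTreeSpanner T 3 := ⟨hTG, hT, fun a b hab => by
    simpa [SimpleGraph.dist_eq_one_iff_adj.2 hab] using hsp a b⟩
  obtain ⟨T', hT', h₅⟩ := hT₃.exists_dist_le_five hG hdiam (D := 9) fun x y =>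
    (hsp x y).trans (by have := hdiam x y; omega)
  exact ⟨T', hT'.le, hT'.isTree, hG.dist_le_mul_dist hT'.isTree.connected hT'.dist_le_of_adj, h₅⟩

/-- A graph of diameter at most 3 that admits a tree 3-spanner admits a tree 3-spanner
of diameter at most 5. -/
theorem stmt_10 {V : Type*} [Fintype V] (G : SimpleGraph V)
    (hG : G.Connected) (hdiam : ∀ x y : V, G.dist x y ≤ 3)
    (h : ∃ T : SimpleGraph V, T ≤ G ∧ T.IsTree ∧
      ∀ x y : V, T.dist x y ≤ 3 * G.dist x y) :
    ∃ T : SimpleGraph V, T ≤ G ∧ T.IsTree ∧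
      (∀ x y : V, T.dist x y ≤ 3 * G.dist x y) ∧
      (∀ x y : V, T.dist x y ≤ 5) :=
  stmt_10_general G hG hdiam h
end

section
/- Let T be a tree 3-spanner of a finite simple graph G, let D be a path in T realizing the diameter of T with diameter at least 6, let a be the second vertex of D, u the next vertex along D after a, and let x be a leaf of T adjacent in T to a. If x is adjacent in G to u, then the tree T' = (T \ {xa}) ∪ {xu} is also a tree 3-spanner of G. -/
/-!
Moving the leaf `x` from `a` to `u` yields a tree in which distances between vertices other
than `x` do not grow, so only pairs `x, w` need attention. Because `P` is diametral, every
`T`-neighbour of `a` other than `u` is a leaf; hence each `G`-neighbour `y` of `x`, which lies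
within `T`-distance 3 of `x`, lies within `T`-distance 2 of `u`. Taking `y` to be the first
step of a `G`-geodesic from `x` to `w`,
`d_T'(x, w) ≤ 1 + d_T(u, y) + d_T(y, w) ≤ 3 + 3 d_G(y, w) = 3 d_G(x, w)`.
-/

namespace SimpleGraph

variable {V : Type*} {G H T : SimpleGraph V} {a u v w x : V}

namespace Walk

lemma IsPath.notMem_support_of_forall_adj_eq {p : G.Walk v w} (hp : p.IsPath)
    (hx : ∀ y, G.Adj x y → y = a) (hv : v ≠ x) (hw : w ≠ x) : x ∉ p.support := by
  intro hmem
  obtain ⟨i, rfl, hi⟩ := p.mem_support_iff_exists_getVert.mp hmem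
  have hi0 : i ≠ 0 := by rintro rfl; exact hv p.getVert_zero.symm
  have hil : i ≠ p.length := by rintro rfl; exact hw p.getVert_length.symm
  obtain ⟨j, rfl⟩ := Nat.exists_eq_succ_of_ne_zero hi0
  have hprev : p.getVert j = a := hx _ (p.adj_getVert_succ (by omega)).symm
  have hnext : p.getVert (j + 2) = a := hx _ (p.adj_getVert_succ (by omega))
  have := hp.getVert_injOn (by simp; omega) (by simp; omega) (hprev.trans hnext.symm)
  omega

lemma IsCycle.notMem_support_of_forall_adj_eq {c : G.Walk v v} (hc : c.IsCycle)
    (hx : ∀ y, G.Adj x y → y = a) : x ∉ c.support := by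
  classical
  intro hmem
  have hc' := hc.rotate hmem
  exact hc'.snd_ne_penultimate <| (hx _ ((c.rotate x hmem).adj_snd hc'.not_nil)).trans
    (hx _ ((c.rotate x hmem).adj_penultimate hc'.not_nil).symm).symm

lemma edges_subset_edgeSet_of_notMem_support {p : G.Walk v w} (hx : x ∉ p.support)
    (hGH : ∀ ⦃y z⦄, y ≠ x → z ≠ x → G.Adj y z → H.Adj y z) : ∀ e ∈ p.edges, e ∈ H.edgeSet := by
  intro e he
  induction e using Sym2.ind with
  | _ y z =>
    exact hGH (ne_of_mem_of_not_mem (p.fst_mem_support_of_mem_edges he) hx)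
      (ne_of_mem_of_not_mem (p.snd_mem_support_of_mem_edges he) hx) (p.adj_of_mem_edges he)

end Walk

open Walk

lemma IsAcyclic.isPath_cons (hG : G.IsAcyclic) {p : G.Walk v w} (hp : p.IsPath) (h : G.Adj u v)
    (hu : u ≠ p.snd) : (cons h p).IsPath :=
  hp.cons fun hmem => hu (hG.eq_snd_of_adj_start hp h.symm hmem)

lemma IsAcyclic.length_eq_dist (hG : G.IsAcyclic) {p : G.Walk v w} (hp : p.IsPath) :
    p.length = G.dist v w := by
  obtain ⟨q, hq, hql⟩ := p.reachable.exists_path_of_dist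
  rw [← hql, Subtype.mk.inj (hG.subsingleton_path v w |>.elim ⟨p, hp⟩ ⟨q, hq⟩)]

def moveLeaf (T : SimpleGraph V) (x a u : V) : SimpleGraph V :=
  T.deleteEdges {s(x, a)} ⊔ fromEdgeSet {s(x, u)}

lemma moveLeaf_adj_of_ne (hv : v ≠ x) (hw : w ≠ x) :
    (T.moveLeaf x a u).Adj v w ↔ T.Adj v w := by
  simp only [moveLeaf, sup_adj, deleteEdges_adj, fromEdgeSet_adj, Set.mem_singleton_iff,
    Sym2.eq_iff]
  grind

lemma moveLeaf_adj_left (hx : ∀ y, T.Adj x y → y = a) (hxu : x ≠ u) :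
    (T.moveLeaf x a u).Adj x v ↔ v = u := by
  simp only [moveLeaf, sup_adj, deleteEdges_adj, fromEdgeSet_adj, Set.mem_singleton_iff,
    Sym2.eq_iff]
  grind

lemma moveLeaf_le (hle : T ≤ G) (hxu : G.Adj x u) : T.moveLeaf x a u ≤ G := by
  refine sup_le ((deleteEdges_le _).trans hle) ?_
  simp [hxu]

lemma exists_moveLeaf_walk (hT : T.Connected) (hx : ∀ y, T.Adj x y → y = a) (hv : v ≠ x)
    (hw : w ≠ x) : ∃ q : (T.moveLeaf x a u).Walk v w, q.length = T.dist v w := by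
  obtain ⟨p, hp, hpl⟩ := hT.exists_path_of_dist v w
  have hxp := hp.notMem_support_of_forall_adj_eq hx hv hw
  refine ⟨p.transfer _ (edges_subset_edgeSet_of_notMem_support hxp
    fun _ _ hy hz => (moveLeaf_adj_of_ne hy hz).mpr), ?_⟩
  rw [length_transfer, hpl]

lemma moveLeaf_dist_le (hT : T.Connected) (hx : ∀ y, T.Adj x y → y = a) (hv : v ≠ x)
    (hw : w ≠ x) : (T.moveLeaf x a u).dist v w ≤ T.dist v w := by
  obtain ⟨q, hq⟩ := exists_moveLeaf_walk (u := u) hT hx hv hw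
  exact hq ▸ dist_le q

lemma moveLeaf_isTree (hT : T.IsTree) (hx : ∀ y, T.Adj x y → y = a) (hxu : x ≠ u) :
    (T.moveLeaf x a u).IsTree where
  connected := by
    refine (connected_iff_exists_forall_reachable _).mpr ⟨u, fun w => ?_⟩
    obtain rfl | hw := eq_or_ne w x
    · exact ((moveLeaf_adj_left hx hxu).mpr rfl).reachable.symm
    · exact (exists_moveLeaf_walk hT.connected hx hxu.symm hw).elim fun q _ => ⟨q⟩
  isAcyclic v c hc := by
    have hxc := hc.notMem_support_of_forall_adj_eq fun y => (moveLeaf_adj_left hx hxu).mp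
    exact hT.isAcyclic _ (hc.transfer (edges_subset_edgeSet_of_notMem_support hxc
      fun _ _ hy hz => (moveLeaf_adj_of_ne hy hz).mp))

lemma moveLeaf_dist_left_le (hle : T ≤ G) (hT : T.Connected)
    (hspan : ∀ p q, T.dist p q ≤ 3 * G.dist p q) (hx : ∀ y, T.Adj x y → y = a) (hxu : x ≠ u)
    (hnear : ∀ y, G.Adj x y → T.dist u y ≤ 2) (hw : w ≠ x) :
    (T.moveLeaf x a u).dist x w ≤ 3 * G.dist x w := by
  obtain ⟨W, hW⟩ := (hT.mono hle).exists_walk_length_eq_dist x w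
  cases W with
  | nil => exact absurd rfl hw
  | @cons _ y _ hxy W =>
    have hxu' : (T.moveLeaf x a u).Adj x u := (moveLeaf_adj_left hx hxu).mpr rfl
    calc (T.moveLeaf x a u).dist x w
        ≤ (T.moveLeaf x a u).dist x u + (T.moveLeaf x a u).dist u w :=
          hxu'.reachable.dist_triangle_left w
      _ ≤ 1 + T.dist u w := by
          rw [dist_eq_one_iff_adj.mpr hxu']
          exact Nat.add_le_add_left (moveLeaf_dist_le hT hx hxu.symm hw) 1
      _ ≤ 1 + (T.dist u y + T.dist y w) := Nat.add_le_add_left (hT.dist_triangle) 1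
      _ ≤ 1 + (2 + 3 * W.length) := by
          gcongr
          · exact hnear y hxy
          · exact (hspan y w).trans (Nat.mul_le_mul_left 3 (dist_le W))
      _ = 3 * G.dist x w := by rw [← hW, length_cons]; ring

lemma moveLeaf_dist_le_three_mul (hle : T ≤ G) (hT : T.Connected)
    (hspan : ∀ p q, T.dist p q ≤ 3 * G.dist p q) (hx : ∀ y, T.Adj x y → y = a) (hxu : x ≠ u)
    (hnear : ∀ y, G.Adj x y → T.dist u y ≤ 2) (v w : V) :
    (T.moveLeaf x a u).dist v w ≤ 3 * G.dist v w := by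
  obtain rfl | hv := eq_or_ne v x
  · obtain rfl | hw := eq_or_ne w v
    · simp
    · exact moveLeaf_dist_left_le hle hT hspan hx hxu hnear hw
  obtain rfl | hw := eq_or_ne w x
  · rw [dist_comm, G.dist_comm]
    exact moveLeaf_dist_left_le hle hT hspan hx hxu hnear hv
  · exact (moveLeaf_dist_le hT hx hv hw).trans (hspan v w)

lemma IsTree.eq_of_adj_of_adj_of_ne_snd (hT : T.IsTree) {Q : T.Walk a w} (hQ : Q.IsPath)
    (hdiam : ∀ p q, T.dist p q ≤ Q.length + 1) {b c : V} (hab : T.Adj a b) (hb : b ≠ Q.snd)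
    (hbc : T.Adj b c) : c = a := by
  -- otherwise `c, b` followed by `Q` is a path longer than the diameter
  by_contra hca
  have hbQ := hT.isAcyclic.isPath_cons hQ hab.symm hb
  have hcbQ := hT.isAcyclic.isPath_cons hbQ hbc.symm (by rwa [snd_cons])
  have := hT.isAcyclic.length_eq_dist hcbQ
  have := hdiam c w
  simp only [length_cons] at *
  omega

lemma dist_le_two_of_adj_of_leaves (hT : T.Connected)
    (hspan : ∀ p q, T.dist p q ≤ 3 * G.dist p q) (hx : ∀ y, T.Adj x y → y = a) (hau : T.Adj a u)
    (hleaves : ∀ b c, T.Adj a b → b ≠ u → T.Adj b c → c = a) {y : V} (hxy : G.Adj x y) :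
    T.dist u y ≤ 2 := by
  have hxy3 : T.dist x y ≤ 3 := by simpa [dist_eq_one_iff_adj.mpr hxy] using hspan x y
  have hua : T.dist u a ≤ 1 := dist_le (cons hau.symm nil)
  obtain ⟨p, hp⟩ := hT.exists_walk_length_eq_dist x y
  rcases p with _ | ⟨h₁, _ | ⟨h₂, _ | ⟨h₃, _ | ⟨_, p⟩⟩⟩⟩
  · exact absurd rfl hxy.ne
  · rw [← hx _ h₁] at hua
    omega
  · obtain rfl := hx _ h₁
    exact dist_le (cons hau.symm (cons h₂ nil))
  · obtain rfl := hx _ h₁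
    rename_i m
    obtain rfl | hmu := eq_or_ne m u
    · exact (dist_le (cons h₃ nil)).trans (by simp)
    · rw [← hleaves _ _ h₂ hmu h₃] at hua
      omega
  · simp only [length_cons] at hp
    omega

end SimpleGraph

open SimpleGraph Walk

theorem stmt_11_general {V : Type*} (G T : SimpleGraph V)
    (hle : T ≤ G) (hT : T.IsTree)
    (hspan : ∀ p q : V, T.dist p q ≤ 3 * G.dist p q)
    (s t : V) (P : T.Walk s t) (hP : P.IsPath)
    (hdiam : ∀ x y : V, T.dist x y ≤ P.length)
    (h6 : 6 ≤ P.length)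
    (a u x : V) (ha : P.getVert 1 = a) (hu : P.getVert 2 = u)
    (hleaf : ∀ y : V, T.Adj x y → y = a)
    (hxu : G.Adj x u)
    (T' : SimpleGraph V)
    (hT' : T' = T.deleteEdges {s(x, a)} ⊔ SimpleGraph.fromEdgeSet {s(x, u)}) :
    T' ≤ G ∧ T'.IsTree ∧ ∀ p q : V, T'.dist p q ≤ 3 * G.dist p q := by
  subst hT'
  cases P with
  | nil => simp at h6
  | @cons _ a' _ hsa Q =>
    simp only [getVert_cons_succ, length_cons] at ha hu hdiam h6
    rw [getVert_zero] at ha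
    subst a'
    have hQ : Q.IsPath := hP.of_cons
    have hau : T.Adj a u := Q.getVert_zero ▸ hu ▸ Q.adj_getVert_succ (by omega)
    -- `u` has the neighbour `Q.getVert 2 ≠ a`, so it is not the leaf `x`
    have hxu_ne : x ≠ u := by
      rintro rfl
      have h2 : Q.getVert 2 = Q.getVert 0 :=
        (hleaf _ (hu ▸ Q.adj_getVert_succ (by omega))).trans Q.getVert_zero.symm
      have := hQ.getVert_injOn (by simp; omega) (by simp) h2
      omega
    have hleaves : ∀ b c, T.Adj a b → b ≠ u → T.Adj b c → c = a := fun _ _ hab hb hbc =>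
      hT.eq_of_adj_of_adj_of_ne_snd hQ hdiam hab (hu ▸ hb : _ ≠ Q.getVert 1) hbc
    exact ⟨moveLeaf_le hle hxu, moveLeaf_isTree hT hleaf hxu_ne,
      moveLeaf_dist_le_three_mul hle hT.connected hspan hleaf hxu_ne fun _ hxy =>
        dist_le_two_of_adj_of_leaves hT.connected hspan hleaf hau hleaves hxy⟩

/-- Moving a leaf `x` of `T` hanging at the second vertex `a` of a diametral path of length
at least 6 so that it hangs at the next vertex `u` instead (given `x` is `G`-adjacent to `u`)
preserves the tree 3-spanner property. -/
theorem stmt_11 {V : Type*} [Fintype V] (G T : SimpleGraph V)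
    (hle : T ≤ G) (hT : T.IsTree)
    (hspan : ∀ p q : V, T.dist p q ≤ 3 * G.dist p q)
    (s t : V) (P : T.Walk s t) (hP : P.IsPath)
    (hdiam : ∀ x y : V, T.dist x y ≤ P.length) (hlen : P.length = T.dist s t)
    (h6 : 6 ≤ P.length)
    (a u x : V) (ha : P.getVert 1 = a) (hu : P.getVert 2 = u)
    (hax : T.Adj a x) (hleaf : ∀ y : V, T.Adj x y → y = a)
    (hxu : G.Adj x u)
    (T' : SimpleGraph V)
    (hT' : T' = T.deleteEdges {s(x, a)} ⊔ SimpleGraph.fromEdgeSet {s(x, u)}) :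
    T' ≤ G ∧ T'.IsTree ∧ ∀ p q : V, T'.dist p q ≤ 3 * G.dist p q :=
  stmt_11_general G T hle hT hspan s t P hP hdiam h6 a u x ha hu hleaf hxu T' hT'
end
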